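/- For every measurable f : (0,∞) → [0,∞) with ‖f‖ < ∞ and every integer n ≥ 1, one has ‖S₁ⁿ S₂ f‖ ≤ Ω⁺(b,a)·( ‖S₁^{n−1} S₂ f‖ + ‖S₁ⁿ f‖ ), where S₁⁰ denotes the identity operator and S₁ⁿ the n-th iterate of S₁. -/

import Mathlib

open MeasureTheory Set Filter
open scoped ENNReal

/-- `B(x) = ∫₀ˣ (b/a)(y) dy`. -/
noncomputable def Bfun (a b : ℝ → ℝ) (x : ℝ) : ℝ := ∫ y in (0:ℝ)..x, b y / a y

/-- `‖f‖ = ∫₀^∞ f(x) e^{2B(x)} dx` for nonnegative (extended-real-valued) `f`. -/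
noncomputable def wNorm (a b : ℝ → ℝ) (f : ℝ → ℝ≥0∞) : ℝ≥0∞ :=
  ∫⁻ x in Ioi (0:ℝ), f x * ENNReal.ofReal (Real.exp (2 * Bfun a b x))

/-- `S₁f(x) = (∫₀ˣ (1/a) e^{-2B} dz)(∫ₓ^∞ f e^{2B} dz)`. -/
noncomputable def S1 (a b : ℝ → ℝ) (f : ℝ → ℝ≥0∞) : ℝ → ℝ≥0∞ := fun x =>
  ENNReal.ofReal (∫ z in (0:ℝ)..x, (a z)⁻¹ * Real.exp (-2 * Bfun a b z)) *
    ∫⁻ z in Ioi x, f z * ENNReal.ofReal (Real.exp (2 * Bfun a b z))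

/-- `S₂f(x) = ∫₀ˣ f(z) e^{2B(z)} (∫₀^z (1/a) e^{-2B} dt) dz`. -/
noncomputable def S2 (a b : ℝ → ℝ) (f : ℝ → ℝ≥0∞) : ℝ → ℝ≥0∞ := fun x =>
  ∫⁻ z in Ioo (0:ℝ) x,
    f z * ENNReal.ofReal (Real.exp (2 * Bfun a b z) *
      ∫ t in (0:ℝ)..z, (a t)⁻¹ * Real.exp (-2 * Bfun a b t))

/-- `Ω⁺(b,a) = sup_{x>0} (∫₀ˣ (1/a) e^{-2B}) (∫ₓ^∞ e^{2B}) ∈ [0,∞]`. -/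
noncomputable def OmegaPlus (a b : ℝ → ℝ) : ℝ≥0∞ :=
  ⨆ x ∈ Ioi (0:ℝ),
    ENNReal.ofReal (∫ y in (0:ℝ)..x, (a y)⁻¹ * Real.exp (-2 * Bfun a b y)) *
      ∫⁻ y in Ioi x, ENNReal.ofReal (Real.exp (2 * Bfun a b y))

/-!
Let `W(x) = ∫₀ˣ e^{-2B}/a`, `R(t) = ∫ₜ^∞ e^{2B}` and `F = f e^{2B} W`. For `0 < x ≤ z`,
`S₂f(z) = S₂f(x) + ∫_{[x,z)} F`, so by Tonelli
`S₁(S₂f)(x) = W(x) (S₂f(x) R(x) + ∫ₓ^∞ F R)`. Since `W R ≤ Ω⁺` on `(0,∞)`, the first term is at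
most `Ω⁺ S₂f(x)` and the second at most `Ω⁺ W(x) ∫ₓ^∞ f e^{2B} = Ω⁺ S₁f(x)`. Both `S₁` and `‖·‖` are
tail integrals against the weight `e^{2B}`, so they preserve the pointwise bound
`S₁S₂f ≤ Ω⁺ (S₂f + S₁f)`, and iterating it gives the claim.
-/

theorem continuousOn_primitive_Ici {g : ℝ → ℝ} {c : ℝ} (hg : ContinuousOn g (Ici c)) :
    ContinuousOn (fun x => ∫ t in c..x, g t) (Ici c) := by
  intro x hx
  have hIcc : uIcc c (x + 1) = Icc c (x + 1) := uIcc_of_le (by linarith [mem_Ici.mp hx])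
  have hint : IntegrableOn g (uIcc c (x + 1)) := by
    rw [hIcc]
    exact (hg.mono Icc_subset_Ici_self).integrableOn_compact isCompact_Icc
  refine (intervalIntegral.continuousOn_primitive_interval hint x ?_).mono_of_mem_nhdsWithin ?_
  · rw [hIcc]
    exact ⟨hx, by linarith⟩
  · rw [hIcc, ← Ici_inter_Iic]
    exact inter_mem_nhdsWithin _ (Iic_mem_nhds (by linarith))

theorem lintegral_le_const_mul_add {α : Type*} [MeasurableSpace α] {μ : Measure α}
    {g p q : α → ℝ≥0∞} {c : ℝ≥0∞} (hc : c ≠ ⊤) (hq : AEMeasurable q μ)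
    (h : ∀ᵐ z ∂μ, g z ≤ c * (p z + q z)) :
    ∫⁻ z, g z ∂μ ≤ c * (∫⁻ z, p z ∂μ + ∫⁻ z, q z ∂μ) :=
  calc ∫⁻ z, g z ∂μ ≤ ∫⁻ z, c * (p z + q z) ∂μ := lintegral_mono_ae h
    _ = c * (∫⁻ z, p z ∂μ + ∫⁻ z, q z ∂μ) := by
      rw [lintegral_const_mul' c _ hc, lintegral_add_right' p hq]

theorem setLIntegral_Ioi_lintegral_Ico_mul {μ : Measure ℝ} [SFinite μ] {F w : ℝ → ℝ≥0∞}
    {x : ℝ} (hF : AEMeasurable F (μ.restrict (Ici x)))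
    (hw : AEMeasurable w (μ.restrict (Ioi x))) :
    ∫⁻ z in Ioi x, (∫⁻ t in Ico x z, F t ∂μ) * w z ∂μ =
      ∫⁻ t in Ici x, F t * ∫⁻ z in Ioi t, w z ∂μ ∂μ := by
  set k : ℝ → ℝ → ℝ≥0∞ := fun z t => (Iio z).indicator (fun t => F t * w z) t
  have hk :
      AEMeasurable (Function.uncurry k) ((μ.restrict (Ioi x)).prod (μ.restrict (Ici x))) :=
    (hF.comp_snd.mul hw.comp_fst).indicator (measurableSet_lt measurable_snd measurable_fst)
  calc ∫⁻ z in Ioi x, (∫⁻ t in Ico x z, F t ∂μ) * w z ∂μ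
      = ∫⁻ z in Ioi x, ∫⁻ t in Ici x, k z t ∂μ ∂μ := by
        refine setLIntegral_congr_fun measurableSet_Ioi fun z _ => ?_
        rw [setLIntegral_indicator measurableSet_Iio, Iio_inter_Ici, lintegral_mul_const'' _
          (hF.mono_measure (Measure.restrict_mono Ico_subset_Ici_self le_rfl))]
    _ = ∫⁻ t in Ici x, ∫⁻ z in Ioi x, k z t ∂μ ∂μ := lintegral_lintegral_swap hk
    _ = ∫⁻ t in Ici x, F t * ∫⁻ z in Ioi t, w z ∂μ ∂μ := by
        refine setLIntegral_congr_fun measurableSet_Ici fun t ht => ?_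
        change ∫⁻ z in Ioi x, (Ioi t).indicator (fun z => F t * w z) z ∂μ = _
        rw [setLIntegral_indicator measurableSet_Ioi, Ioi_inter_Ioi, max_eq_left (mem_Ici.mp ht),
          lintegral_const_mul'' _
            (hw.mono_measure (Measure.restrict_mono (Ioi_subset_Ioi ht) le_rfl))]

namespace HardyDiffusion

noncomputable def weight (a b : ℝ → ℝ) (z : ℝ) : ℝ≥0∞ :=
  ENNReal.ofReal (Real.exp (2 * Bfun a b z))

noncomputable def scale (a b : ℝ → ℝ) (x : ℝ) : ℝ :=
  ∫ z in (0:ℝ)..x, (a z)⁻¹ * Real.exp (-2 * Bfun a b z)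

noncomputable def tail (a b : ℝ → ℝ) (g : ℝ → ℝ≥0∞) (x : ℝ) : ℝ≥0∞ :=
  ∫⁻ z in Ioi x, g z * weight a b z

noncomputable def s2Density (a b : ℝ → ℝ) (f : ℝ → ℝ≥0∞) (t : ℝ) : ℝ≥0∞ :=
  f t * ENNReal.ofReal (Real.exp (2 * Bfun a b t) * scale a b t)

variable {a b : ℝ → ℝ}

theorem S1_apply (g : ℝ → ℝ≥0∞) (x : ℝ) :
    S1 a b g x = ENNReal.ofReal (scale a b x) * tail a b g x := rfl

theorem wNorm_eq_tail (g : ℝ → ℝ≥0∞) : wNorm a b g = tail a b g 0 := rfl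

theorem ofReal_scale_mul_le_omegaPlus {x : ℝ} (hx : 0 < x) :
    ENNReal.ofReal (scale a b x) * ∫⁻ z in Ioi x, weight a b z ≤ OmegaPlus a b :=
  le_iSup₂ (f := fun x (_ : x ∈ Ioi (0:ℝ)) =>
    ENNReal.ofReal (scale a b x) * ∫⁻ z in Ioi x, weight a b z) x hx

theorem antitone_tail (g : ℝ → ℝ≥0∞) : Antitone (tail a b g) := fun _ _ hxy =>
  lintegral_mono' (Measure.restrict_mono (Ioi_subset_Ioi hxy) le_rfl) le_rfl

theorem S2_eq_add_lintegral_Ico (f : ℝ → ℝ≥0∞) {x z : ℝ} (hx : 0 < x) (hxz : x ≤ z) :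
    S2 a b f z = S2 a b f x + ∫⁻ t in Ico x z, s2Density a b f t := by
  have hdisj : Disjoint (Ioo 0 x) (Ico x z) :=
    disjoint_left.2 fun t h₁ h₂ => (not_le.2 h₁.2) h₂.1
  rw [S2, ← Ioo_union_Ico_eq_Ioo hx hxz, lintegral_union measurableSet_Ico hdisj]
  rfl

theorem continuousOn_Bfun (ha : ContinuousOn a (Ici 0)) (hapos : ∀ x ∈ Ici (0:ℝ), 0 < a x)
    (hb : ContinuousOn b (Ici 0)) : ContinuousOn (Bfun a b) (Ici 0) :=
  continuousOn_primitive_Ici (hb.div ha fun x hx => (hapos x hx).ne')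

theorem continuousOn_scale (ha : ContinuousOn a (Ici 0)) (hapos : ∀ x ∈ Ici (0:ℝ), 0 < a x)
    (hB : ContinuousOn (Bfun a b) (Ici 0)) : ContinuousOn (scale a b) (Ici 0) :=
  continuousOn_primitive_Ici <| (ha.inv₀ fun x hx => (hapos x hx).ne').mul
    (Real.continuous_exp.comp_continuousOn (continuousOn_const.mul hB))

variable {s : Set ℝ}

theorem aemeasurable_weight (hB : ContinuousOn (Bfun a b) (Ici 0)) (hs : MeasurableSet s)
    (hs0 : s ⊆ Ici 0) : AEMeasurable (weight a b) (volume.restrict s) :=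
  ((Real.continuous_exp.comp_continuousOn (continuousOn_const.mul hB)).mono hs0).aemeasurable
    hs |>.ennreal_ofReal

theorem aemeasurable_S1 (hW : ContinuousOn (scale a b) (Ici 0)) (hs : MeasurableSet s)
    (hs0 : s ⊆ Ici 0) (g : ℝ → ℝ≥0∞) : AEMeasurable (S1 a b g) (volume.restrict s) :=
  ((hW.mono hs0).aemeasurable hs).ennreal_ofReal.mul (antitone_tail g).measurable.aemeasurable

theorem tail_le_of_le (hB : ContinuousOn (Bfun a b) (Ici 0))
    (hW : ContinuousOn (scale a b) (Ici 0))
    {g p q : ℝ → ℝ≥0∞} {c : ℝ≥0∞} {x : ℝ} (hx : 0 ≤ x) (hc : c ≠ ⊤)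
    (h : ∀ z > x, g z ≤ c * (p z + S1 a b q z)) :
    tail a b g x ≤ c * (tail a b p x + tail a b (S1 a b q) x) := by
  have hIoi : Ioi x ⊆ Ici 0 := fun z hz => hx.trans hz.le
  refine lintegral_le_const_mul_add hc ((aemeasurable_S1 hW measurableSet_Ioi hIoi q).mul
    (aemeasurable_weight hB measurableSet_Ioi hIoi)) (ae_restrict_of_forall_mem measurableSet_Ioi
    fun z hz => ?_)
  calc g z * weight a b z ≤ c * (p z + S1 a b q z) * weight a b z := by gcongr; exact h z hz
    _ = c * (p z * weight a b z + S1 a b q z * weight a b z) := by ring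

theorem tail_S2_eq (hB : ContinuousOn (Bfun a b) (Ici 0))
    (hW : ContinuousOn (scale a b) (Ici 0))
    {f : ℝ → ℝ≥0∞} (hf : Measurable f) {x : ℝ} (hx : 0 < x) :
    tail a b (S2 a b f) x = S2 a b f x * (∫⁻ z in Ioi x, weight a b z) +
      ∫⁻ t in Ici x, s2Density a b f t * ∫⁻ z in Ioi t, weight a b z := by
  have hIci : Ici x ⊆ Ici 0 := Ici_subset_Ici.2 hx.le
  have hIoi : Ioi x ⊆ Ici 0 := Ioi_subset_Ici_self.trans hIci
  have hweight := aemeasurable_weight hB measurableSet_Ioi hIoi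
  have hF : AEMeasurable (s2Density a b f) (volume.restrict (Ici x)) :=
    hf.aemeasurable.mul <| ((((Real.continuous_exp.comp_continuousOn
      (continuousOn_const.mul hB)).mul hW).mono hIci).aemeasurable measurableSet_Ici).ennreal_ofReal
  calc tail a b (S2 a b f) x
      = ∫⁻ z in Ioi x, (S2 a b f x + ∫⁻ t in Ico x z, s2Density a b f t) * weight a b z :=
        setLIntegral_congr_fun measurableSet_Ioi fun z hz => by
          rw [S2_eq_add_lintegral_Ico f hx (le_of_lt hz)]
    _ = _ := by
        simp_rw [add_mul]
        rw [lintegral_add_left' (hweight.const_mul _), lintegral_const_mul'' _ hweight,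
          setLIntegral_Ioi_lintegral_Ico_mul hF hweight]

theorem setLIntegral_Ici_s2Density_mul_le (hB : ContinuousOn (Bfun a b) (Ici 0))
    {f : ℝ → ℝ≥0∞} (hf : Measurable f) {x : ℝ} (hx : 0 < x) :
    ∫⁻ t in Ici x, s2Density a b f t * ∫⁻ z in Ioi t, weight a b z ≤
      OmegaPlus a b * tail a b f x := by
  have hweight := aemeasurable_weight hB measurableSet_Ioi
    (Ioi_subset_Ici_self.trans (Ici_subset_Ici.2 hx.le))
  rw [tail, ← lintegral_const_mul'' (f := fun t => f t * weight a b t) _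
    (hf.aemeasurable.mul hweight), ← restrict_Ioi_eq_restrict_Ici]
  refine lintegral_mono_ae (ae_restrict_of_forall_mem measurableSet_Ioi fun t ht => ?_)
  calc s2Density a b f t * ∫⁻ z in Ioi t, weight a b z
      = f t * weight a b t * (ENNReal.ofReal (scale a b t) * ∫⁻ z in Ioi t, weight a b z) := by
        rw [s2Density, ENNReal.ofReal_mul (Real.exp_pos _).le, weight]; ring
    _ ≤ f t * weight a b t * OmegaPlus a b := by
        gcongr; exact ofReal_scale_mul_le_omegaPlus (hx.trans ht)
    _ = OmegaPlus a b * (f t * weight a b t) := mul_comm _ _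

theorem S1_S2_le (hB : ContinuousOn (Bfun a b) (Ici 0))
    (hW : ContinuousOn (scale a b) (Ici 0))
    {f : ℝ → ℝ≥0∞} (hf : Measurable f) {x : ℝ} (hx : 0 < x) :
    S1 a b (S2 a b f) x ≤ OmegaPlus a b * (S2 a b f x + S1 a b f x) := by
  set W := ENNReal.ofReal (scale a b x)
  set R := ∫⁻ z in Ioi x, weight a b z
  calc S1 a b (S2 a b f) x
      = W * (S2 a b f x * R +
          ∫⁻ t in Ici x, s2Density a b f t * ∫⁻ z in Ioi t, weight a b z) := by
        rw [S1_apply, tail_S2_eq hB hW hf hx]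
    _ ≤ W * (S2 a b f x * R + OmegaPlus a b * tail a b f x) := by
        gcongr; exact setLIntegral_Ici_s2Density_mul_le hB hf hx
    _ = S2 a b f x * (W * R) + OmegaPlus a b * S1 a b f x := by rw [S1_apply]; ring
    _ ≤ S2 a b f x * OmegaPlus a b + OmegaPlus a b * S1 a b f x := by
        gcongr; exact ofReal_scale_mul_le_omegaPlus hx
    _ = OmegaPlus a b * (S2 a b f x + S1 a b f x) := by ring

theorem iterate_S1_S2_le (hB : ContinuousOn (Bfun a b) (Ici 0))
    (hW : ContinuousOn (scale a b) (Ici 0)) (hΩ : OmegaPlus a b ≠ ⊤) {f : ℝ → ℝ≥0∞}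
    (hf : Measurable f) (m : ℕ) {x : ℝ} (hx : 0 < x) :
    (S1 a b)^[m + 1] (S2 a b f) x ≤
      OmegaPlus a b * ((S1 a b)^[m] (S2 a b f) x + (S1 a b)^[m + 1] f x) := by
  induction m generalizing x with
  | zero => exact S1_S2_le hB hW hf hx
  | succ m ih =>
    simp only [Function.iterate_succ_apply'] at ih ⊢
    rw [S1_apply, S1_apply, S1_apply, ← mul_add, mul_left_comm]
    gcongr
    exact tail_le_of_le hB hW hx.le hΩ fun z hz => ih (hx.trans hz)

end HardyDiffusion

open HardyDiffusion

theorem stmt17_general (a b : ℝ → ℝ)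
    (ha : ContDiffOn ℝ 1 a (Ici 0)) (hapos : ∀ x ∈ Ici (0:ℝ), 0 < a x)
    (hb : ContinuousOn b (Ici 0))
    (hΩ : OmegaPlus a b < ⊤)
    (f : ℝ → ℝ≥0∞) (hf : Measurable f)
    (n : ℕ) (hn : 1 ≤ n) :
    wNorm a b ((S1 a b)^[n] (S2 a b f)) ≤
      OmegaPlus a b *
        (wNorm a b ((S1 a b)^[n - 1] (S2 a b f)) + wNorm a b ((S1 a b)^[n] f)) := by
  have hB := continuousOn_Bfun ha.continuousOn hapos hb
  have hW := continuousOn_scale ha.continuousOn hapos hB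
  obtain ⟨m, rfl⟩ : ∃ m, n = m + 1 := ⟨n - 1, by omega⟩
  rw [Nat.add_sub_cancel, wNorm_eq_tail, wNorm_eq_tail, wNorm_eq_tail,
    Function.iterate_succ_apply' _ m f]
  refine tail_le_of_le hB hW le_rfl hΩ.ne fun x hx => ?_
  simpa only [Function.iterate_succ_apply'] using iterate_S1_S2_le hB hW hΩ.ne hf m hx

theorem stmt17 (a b : ℝ → ℝ)
    (ha : ContDiffOn ℝ 1 a (Ici 0)) (hapos : ∀ x ∈ Ici (0:ℝ), 0 < a x)
    (hb : ContinuousOn b (Ici 0))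
    (hinf : ∫⁻ x in Ioi (0:ℝ),
        ENNReal.ofReal ((a x)⁻¹ * Real.exp (-2 * Bfun a b x)) = ⊤)
    (hfin : ∫⁻ x in Ioi (0:ℝ), ENNReal.ofReal (Real.exp (2 * Bfun a b x)) < ⊤)
    (hΩ : OmegaPlus a b < ⊤)
    (f : ℝ → ℝ≥0∞) (hf : Measurable f) (hfnorm : wNorm a b f < ⊤)
    (n : ℕ) (hn : 1 ≤ n) :
    wNorm a b ((S1 a b)^[n] (S2 a b f)) ≤
      OmegaPlus a b *
        (wNorm a b ((S1 a b)^[n - 1] (S2 a b f)) + wNorm a b ((S1 a b)^[n] f)) :=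
  stmt17_general a b ha hapos hb hΩ f hf n hn
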